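/- arXiv:1502.00917 — 9 statements merged into one kernel-verified Lean document; each statement's English description precedes it below -/
import Mathlib

section
/- Let N ≥ 1 and fix a sign vector s = (s_1,…,s_N) ∈ {−1,+1}^N. A function ψ : ℝ^{2N} → ℂ is continuously differentiable and satisfies the multi-time transport equations for s on all of ℝ^{2N} if and only if there exists a continuously differentiable function f : ℝ^N → ℂ such that ψ(t_1,z_1,…,t_N,z_N) = f(z_1 + s_1 t_1, …, z_N + s_N t_N) for all (t_1,z_1,…,t_N,z_N) ∈ ℝ^{2N}. -/
/-!
Write `L(t, z) = (z_k + s_k t_k)_k` for the light-cone coordinates and `E x = (0, x_k)_k` for the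
embedding at time zero, so that `L ∘ E = id`. The transport equations say exactly that `Dψ(p)`
factors through `L`, i.e. `Dψ(p) = Dψ(p) ∘ E ∘ L`. Hence `Dψ` vanishes on `ker L`, and since
`E (L p) - p ∈ ker L`, the fundamental theorem of calculus along the segment gives
`ψ p = ψ (E (L p))`: take `f = ψ ∘ E`. Conversely the chain rule shows that every `f ∘ L`
satisfies the transport equations.
-/

noncomputable section

def Transport {N : ℕ} (s : Fin N → ℝ) (U : Set (Fin N → ℝ × ℝ))
    (ψ : (Fin N → ℝ × ℝ) → ℂ) : Prop :=
  ∀ p ∈ U, ∀ k : Fin N,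
    fderiv ℝ ψ p (Pi.single k ((1 : ℝ), (0 : ℝ)))
      = s k • fderiv ℝ ψ p (Pi.single k ((0 : ℝ), (1 : ℝ)))

theorem apply_add_eq_of_fderiv_apply_eq_zero {E F : Type*} [NormedAddCommGroup E]
    [NormedSpace ℝ E] [NormedAddCommGroup F] [NormedSpace ℝ F] {f : E → F}
    (hf : Differentiable ℝ f) {v : E} (hv : ∀ x, fderiv ℝ f x v = 0) (x : E) :
    f (x + v) = f x := by
  have hline : ∀ τ : ℝ, HasDerivAt (fun τ : ℝ => f (x + τ • v)) 0 τ := fun τ => by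
    simpa [hv, Function.comp_def] using (hf _).hasFDerivAt.comp_hasDerivAt τ
      (((hasDerivAt_id τ).smul_const v).const_add x)
  simpa using is_const_of_deriv_eq_zero (fun τ => (hline τ).differentiableAt)
    (fun τ => (hline τ).deriv) 1 0

section LightCone

variable {N : ℕ}

def lightConeCoord (s : Fin N → ℝ) : (Fin N → ℝ × ℝ) →L[ℝ] (Fin N → ℝ) :=
  ContinuousLinearMap.pi fun k =>
    (ContinuousLinearMap.snd ℝ ℝ ℝ + s k • ContinuousLinearMap.fst ℝ ℝ ℝ).comp
      (ContinuousLinearMap.proj k)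

def atTimeZero : (Fin N → ℝ) →L[ℝ] (Fin N → ℝ × ℝ) :=
  ContinuousLinearMap.pi fun k =>
    (ContinuousLinearMap.inr ℝ ℝ ℝ).comp (ContinuousLinearMap.proj k)

theorem lightConeCoord_apply (s : Fin N → ℝ) (p : Fin N → ℝ × ℝ) :
    lightConeCoord s p = fun k => (p k).2 + s k * (p k).1 := rfl

theorem atTimeZero_apply (x : Fin N → ℝ) : atTimeZero x = fun k => ((0 : ℝ), x k) := rfl

theorem lightConeCoord_single (s : Fin N → ℝ) (k : Fin N) (a b : ℝ) :
    lightConeCoord s (Pi.single k (a, b)) = Pi.single k (b + s k * a) := by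
  ext j; rcases eq_or_ne j k with rfl | h <;> simp [lightConeCoord_apply, *]

theorem atTimeZero_single (k : Fin N) (a : ℝ) :
    atTimeZero (Pi.single k a) = Pi.single (M := fun _ : Fin N => ℝ × ℝ) k ((0 : ℝ), a) := by
  funext j; rcases eq_or_ne j k with rfl | h <;> simp [atTimeZero_apply, *]

@[simp]
theorem lightConeCoord_atTimeZero (s : Fin N → ℝ) (x : Fin N → ℝ) :
    lightConeCoord s (atTimeZero x) = x := by
  ext k; simp [lightConeCoord_apply, atTimeZero_apply]

end LightCone

namespace Transport

variable {N : ℕ} {s : Fin N → ℝ} {ψ : (Fin N → ℝ × ℝ) → ℂ}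

theorem fderiv_eq_comp_lightConeCoord (hT : Transport s Set.univ ψ) (p : Fin N → ℝ × ℝ) :
    fderiv ℝ ψ p = (fderiv ℝ ψ p ∘L atTimeZero) ∘L lightConeCoord s := by
  refine ContinuousLinearMap.coe_injective <| LinearMap.pi_ext' fun k =>
    LinearMap.prod_ext (LinearMap.ext_ring ?_) (LinearMap.ext_ring ?_)
  · show fderiv ℝ ψ p (Pi.single k (1, 0))
      = fderiv ℝ ψ p (atTimeZero (lightConeCoord s (Pi.single k (1, 0))))
    rw [lightConeCoord_single, atTimeZero_single, zero_add, mul_one,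
      show ((0 : ℝ), s k) = s k • ((0 : ℝ), (1 : ℝ)) by simp, Pi.single_smul, map_smul,
      hT p trivial k]
  · show fderiv ℝ ψ p (Pi.single k (0, 1))
      = fderiv ℝ ψ p (atTimeZero (lightConeCoord s (Pi.single k (0, 1))))
    rw [lightConeCoord_single, atTimeZero_single, mul_zero, add_zero]

theorem fderiv_apply_eq_zero (hT : Transport s Set.univ ψ) (p : Fin N → ℝ × ℝ)
    {v : Fin N → ℝ × ℝ} (hv : lightConeCoord s v = 0) : fderiv ℝ ψ p v = 0 := by
  rw [hT.fderiv_eq_comp_lightConeCoord, ContinuousLinearMap.comp_apply, hv,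
    map_zero]

theorem eq_comp_lightConeCoord (hψ : Differentiable ℝ ψ) (hT : Transport s Set.univ ψ)
    (p : Fin N → ℝ × ℝ) : ψ p = ψ (atTimeZero (lightConeCoord s p)) := by
  have hker : lightConeCoord s (atTimeZero (lightConeCoord s p) - p) = 0 := by
    rw [map_sub, lightConeCoord_atTimeZero, sub_self]
  have := apply_add_eq_of_fderiv_apply_eq_zero hψ (fun q => hT.fderiv_apply_eq_zero q hker) p
  rwa [add_sub_cancel, eq_comm] at this

theorem comp_lightConeCoord {f : (Fin N → ℝ) → ℂ} (hf : Differentiable ℝ f) :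
    Transport s Set.univ (f ∘ lightConeCoord s) := by
  intro p _ k
  rw [((hf _).hasFDerivAt.comp p (lightConeCoord s).hasFDerivAt).fderiv]
  simp only [ContinuousLinearMap.comp_apply, lightConeCoord_single, zero_add, mul_one,
    add_zero, mul_zero]
  rw [← map_smul, ← Pi.single_smul, smul_eq_mul, mul_one]

end Transport

theorem stmt0_general (N : ℕ) (s : Fin N → ℝ)
    (ψ : (Fin N → ℝ × ℝ) → ℂ) :
    (ContDiff ℝ 1 ψ ∧ Transport s Set.univ ψ) ↔
      ∃ f : (Fin N → ℝ) → ℂ, ContDiff ℝ 1 f ∧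
        ∀ p : Fin N → ℝ × ℝ, ψ p = f (fun k => (p k).2 + s k * (p k).1) := by
  constructor
  · rintro ⟨hψ, hT⟩
    exact ⟨ψ ∘ atTimeZero, hψ.comp atTimeZero.contDiff,
      hT.eq_comp_lightConeCoord (hψ.differentiable one_ne_zero)⟩
  · rintro ⟨f, hf, hψ⟩
    obtain rfl : ψ = f ∘ lightConeCoord s := funext hψ
    exact ⟨hf.comp (lightConeCoord s).contDiff,
      Transport.comp_lightConeCoord (hf.differentiable one_ne_zero)⟩

/-- a `C¹` function `ψ : ℝ^{2N} → ℂ` satisfies the multi-time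
transport equations for the sign vector `s` on all of `ℝ^{2N}` iff there is a `C¹`
function `f : ℝ^N → ℂ` with `ψ(t₁,z₁,…,t_N,z_N) = f(z₁ + s₁t₁, …, z_N + s_N t_N)`. -/
theorem stmt0 (N : ℕ) (hN : 1 ≤ N) (s : Fin N → ℝ) (hs : ∀ k, s k = 1 ∨ s k = -1)
    (ψ : (Fin N → ℝ × ℝ) → ℂ) :
    (ContDiff ℝ 1 ψ ∧ Transport s Set.univ ψ) ↔
      ∃ f : (Fin N → ℝ) → ℂ, ContDiff ℝ 1 f ∧
        ∀ p : Fin N → ℝ × ℝ, ψ p = f (fun k => (p k).2 + s k * (p k).1) :=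
  stmt0_general N s ψ
end
end

section
/- Let N ≥ 1, let π be a permutation of {1,…,N}, let U ⊆ (ℝ²)^N be open, and suppose that for every s ∈ {−1,+1}^N a continuously differentiable function ψ_s : U → ℂ satisfies the multi-time transport equations for s on U. Set V := {(x_1,…,x_N) ∈ (ℝ²)^N : (x_{π(1)},…,x_{π(N)}) ∈ U} and define φ_s(x_1,…,x_N) := sgn(π) · ψ_{(s_{π(1)},…,s_{π(N)})}(x_{π(1)},…,x_{π(N)}), where sgn(π) is the sign of π. Then for every s ∈ {−1,+1}^N, the function φ_s is continuously differentiable on the open set V and satisfies the multi-time transport equations for s on V. (Antisymmetric continuation of a solution yields a solution.) -/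
noncomputable section

/-- Sign associated with a Bool: `true ↦ +1`, `false ↦ -1`. -/
def sgn (b : Bool) : ℝ := if b then 1 else -1

/-!
Relabelling the particles, `x ↦ x ∘ π`, is a continuous linear isomorphism, so by the chain
rule the derivative of `ψ ∘ π` along the `k`-th time (space) direction is the derivative of `ψ`
along the `π⁻¹ k`-th one. The transport equation of `ψ_{s ∘ π}` there carries the sign
`s (π (π⁻¹ k)) = s k`, and multiplying by the constant `sgn π` commutes with `fderiv`.
-/

section PermuteCoords

variable {𝕜 ι E F : Type*} [NontriviallyNormedField 𝕜] [Fintype ι]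
  [NormedAddCommGroup E] [NormedSpace 𝕜 E] [NormedAddCommGroup F] [NormedSpace 𝕜 F]

def permuteCoords (π : Equiv.Perm ι) : (ι → E) ≃L[𝕜] (ι → E) where
  __ := LinearEquiv.funCongrLeft 𝕜 E π
  continuous_toFun := continuous_pi fun k => continuous_apply (π k)
  continuous_invFun := continuous_pi fun k => continuous_apply (π.symm k)

theorem fderiv_comp_permuteCoords (π : Equiv.Perm ι) (f : (ι → E) → F) (p v : ι → E) :
    fderiv 𝕜 (fun x => f fun k => x (π k)) p v = fderiv 𝕜 f (fun k => p (π k)) fun k => v (π k) :=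
  DFunLike.congr_fun ((permuteCoords (𝕜 := 𝕜) π).comp_right_fderiv (f := f) (x := p)) v

end PermuteCoords

namespace Transport

variable {N : ℕ} {U : Set (Fin N → ℝ × ℝ)} {ψ : (Fin N → ℝ × ℝ) → ℂ}

theorem const_mul {s : Fin N → ℝ} (c : ℂ) (h : Transport s U ψ) :
    Transport s U fun x => c * ψ x := by
  intro p hp k
  have hc : fderiv ℝ (fun x => c * ψ x) p = c • fderiv ℝ ψ p :=
    congrFun (fderiv_const_smul_field (f := ψ) c) p
  rw [hc, smul_apply, smul_apply, h p hp k, smul_comm]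

theorem comp_perm {σ : Fin N → ℝ} (π : Equiv.Perm (Fin N))
    (h : Transport (fun k => σ (π k)) U ψ) :
    Transport σ {x | (fun k => x (π k)) ∈ U} fun x => ψ fun k => x (π k) := by
  intro p hp k
  have hsingle (a : ℝ × ℝ) : (fun j => (Pi.single k a : Fin N → ℝ × ℝ) (π j)) =
      (Pi.single (π.symm k) a : Fin N → ℝ × ℝ) :=
    Pi.single_comp_equiv π k a
  simp only [fderiv_comp_permuteCoords, hsingle]
  rw [h _ hp (π.symm k)]
  simp only [Equiv.apply_symm_apply]

end Transport

theorem stmt2_general (N : ℕ) (π : Equiv.Perm (Fin N))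
    (U : Set (Fin N → ℝ × ℝ)) (hU : IsOpen U)
    (ψ : (Fin N → Bool) → (Fin N → ℝ × ℝ) → ℂ)
    (hC1 : ∀ s : Fin N → Bool, ContDiffOn ℝ 1 (ψ s) U)
    (hT : ∀ s : Fin N → Bool, Transport (fun k => sgn (s k)) U (ψ s)) :
    IsOpen {x : Fin N → ℝ × ℝ | (fun k => x (π k)) ∈ U} ∧
    ∀ s : Fin N → Bool,
      ContDiffOn ℝ 1
        (fun x : Fin N → ℝ × ℝ =>
          ((Equiv.Perm.sign π : ℤ) : ℂ) * ψ (fun k => s (π k)) (fun k => x (π k)))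
        {x : Fin N → ℝ × ℝ | (fun k => x (π k)) ∈ U} ∧
      Transport (fun k => sgn (s k))
        {x : Fin N → ℝ × ℝ | (fun k => x (π k)) ∈ U}
        (fun x : Fin N → ℝ × ℝ =>
          ((Equiv.Perm.sign π : ℤ) : ℂ) * ψ (fun k => s (π k)) (fun k => x (π k))) := by
  let L : (Fin N → ℝ × ℝ) ≃L[ℝ] (Fin N → ℝ × ℝ) := permuteCoords π
  refine ⟨hU.preimage L.continuous, fun s => ⟨?_, ?_⟩⟩
  · exact contDiffOn_const.mul ((hC1 _).comp L.contDiff.contDiffOn fun _ hx => hx)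
  · exact ((hT _).comp_perm π).const_mul _

/-- antisymmetric continuation of a family of solutions of the multi-time
transport equations along a permutation `π` again yields a family of solutions, on the
permuted (open) domain `V = {x : x ∘ π ∈ U}`, with
`φ_s(x₁,…,x_N) = sgn(π) · ψ_{s∘π}(x_{π(1)},…,x_{π(N)})`. -/
theorem stmt2 (N : ℕ) (hN : 1 ≤ N) (π : Equiv.Perm (Fin N))
    (U : Set (Fin N → ℝ × ℝ)) (hU : IsOpen U)
    (ψ : (Fin N → Bool) → (Fin N → ℝ × ℝ) → ℂ)
    (hC1 : ∀ s : Fin N → Bool, ContDiffOn ℝ 1 (ψ s) U)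
    (hT : ∀ s : Fin N → Bool, Transport (fun k => sgn (s k)) U (ψ s)) :
    IsOpen {x : Fin N → ℝ × ℝ | (fun k => x (π k)) ∈ U} ∧
    ∀ s : Fin N → Bool,
      ContDiffOn ℝ 1
        (fun x : Fin N → ℝ × ℝ =>
          ((Equiv.Perm.sign π : ℤ) : ℂ) * ψ (fun k => s (π k)) (fun k => x (π k)))
        {x : Fin N → ℝ × ℝ | (fun k => x (π k)) ∈ U} ∧
      Transport (fun k => sgn (s k))
        {x : Fin N → ℝ × ℝ | (fun k => x (π k)) ∈ U}
        (fun x : Fin N → ℝ × ℝ =>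
          ((Equiv.Perm.sign π : ℤ) : ℂ) * ψ (fun k => s (π k)) (fun k => x (π k))) :=
  stmt2_general N π U hU ψ hC1 hT
end
end

section
/- Let N ≥ 2, let 1 ≤ k ≤ N−1, and let v : {−1,+1}^N → ℂ. For μ ∈ {0,1}^N define the current component j^μ(v) := Σ_{s ∈ {−1,+1}^N} (∏_{l : μ_l = 1} s_l) |v(s)|². Suppose that |v(s)| = |v(τ_k s)| for every s ∈ {−1,+1}^N with s_k = +1 and s_{k+1} = −1, where τ_k s denotes s with the entries at positions k and k+1 interchanged. Then for every μ ∈ {0,1}^N one has j^μ(v) = j^{μ'}(v), where μ' denotes μ with the entries at positions k and k+1 interchanged. -/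
noncomputable section

/-- Component `j^μ(v)` of the tensor current of a spinor `v : {−1,+1}^N → ℂ`, for a
multi-index `μ ∈ {0,1}^N` (encoded by `μ : Fin N → Bool`, `true ↔ 1`):
`j^μ(v) = Σ_s (∏_{l : μ_l = 1} s_l) |v(s)|²`. -/
def currentComp {N : ℕ} (μ : Fin N → Bool) (v : (Fin N → Bool) → ℂ) : ℝ :=
  ∑ s : Fin N → Bool,
    (∏ l ∈ Finset.univ.filter (fun l : Fin N => μ l = true), sgn (s l))
      * ‖v s‖ ^ 2

/-! The current depends on `v` only through `‖v‖`, and permuting the slots of `μ` amounts to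
permuting the slots of the spin configurations. So `j^μ(v) = j^{μ'}(v)` as soon as `‖v‖` is
invariant under `τ_k`, and the one-sided boundary condition gives exactly this invariance:
`τ_k` fixes `s` when `s_k = s_{k+1}`, and for `s_k = -1`, `s_{k+1} = +1` the condition applies
to `τ_k s`. -/

theorem comp_swap_eq_self {ι α : Type*} [DecidableEq ι] {a b : ι} {s : ι → α}
    (h : s a = s b) : s ∘ Equiv.swap a b = s := by
  funext l
  rcases eq_or_ne l a with rfl | hla
  · simp [h]
  rcases eq_or_ne l b with rfl | hlb
  · simp [h]
  simp [Equiv.swap_apply_of_ne_of_ne hla hlb]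

theorem comp_swap_invariant_of_true_false {ι β : Type*} [DecidableEq ι] {a b : ι}
    {f : (ι → Bool) → β}
    (h : ∀ s : ι → Bool, s a = true → s b = false → f s = f (s ∘ Equiv.swap a b))
    (s : ι → Bool) : f (s ∘ Equiv.swap a b) = f s := by
  cases hsa : s a <;> cases hsb : s b
  · rw [comp_swap_eq_self (hsa.trans hsb.symm)]
  · have := h (s ∘ Equiv.swap a b) (by simp [hsb]) (by simp [hsa])
    rwa [Function.comp_assoc, ← Equiv.Perm.coe_mul, Equiv.swap_mul_self, Equiv.Perm.coe_one,
      Function.comp_id] at this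
  · exact (h s hsa hsb).symm
  · rw [comp_swap_eq_self (hsa.trans hsb.symm)]

theorem currentComp_congr_norm {N : ℕ} (μ : Fin N → Bool) {v w : (Fin N → Bool) → ℂ}
    (h : ∀ s, ‖v s‖ = ‖w s‖) : currentComp μ v = currentComp μ w := by
  simp only [currentComp, h]

theorem currentComp_comp_perm {N : ℕ} (μ : Fin N → Bool) (σ : Equiv.Perm (Fin N))
    (v : (Fin N → Bool) → ℂ) :
    currentComp (μ ∘ σ) v = currentComp μ (fun s => v (s ∘ σ)) := by
  unfold currentComp
  rw [← (Equiv.arrowCongr σ.symm (Equiv.refl Bool)).sum_comp]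
  refine Fintype.sum_congr _ _ fun s => ?_
  simp only [Equiv.arrowCongr_apply, Equiv.symm_symm, Equiv.coe_refl, Function.id_comp]
  congr 1
  rw [Finset.prod_filter, Finset.prod_filter]
  exact σ.prod_comp _ (fun m => if μ m = true then sgn (s m) else 1) (by simp)

/-- if `|v(s)| = |v(τ_k s)|` for all sign vectors with `s_k = +1`,
`s_{k+1} = −1` (where `τ_k` interchanges the entries at positions `k` and `k+1`),
then `j^μ(v) = j^{μ'}(v)` for every `μ`, where `μ'` is `μ` with entries `k`, `k+1`
interchanged. (0-based indices: `k+1 < N`.) -/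
theorem stmt4 (N : ℕ) (k : ℕ) (hk : k + 1 < N)
    (v : (Fin N → Bool) → ℂ)
    (hbc : ∀ s : Fin N → Bool, s ⟨k, by omega⟩ = true → s ⟨k + 1, hk⟩ = false →
      ‖v s‖
        = ‖v (s ∘ Equiv.swap ⟨k, by omega⟩ ⟨k + 1, hk⟩)‖) :
    ∀ μ : Fin N → Bool,
      currentComp μ v
        = currentComp (μ ∘ Equiv.swap ⟨k, by omega⟩ ⟨k + 1, hk⟩) v := by
  intro μ
  rw [currentComp_comp_perm]
  exact currentComp_congr_norm μ fun s => (comp_swap_invariant_of_true_false hbc s).symm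
end
end

section
/- Let N ≥ 3 and let (t_1,z_1,…,t_N,z_N) ∈ ℝ^{2N} satisfy (t_j − t_k)² < (z_j − z_k)² for all j ≠ k and z_1 < z_2 < ⋯ < z_N. Let s ∈ {−1,+1}^N and set c_k := z_k + s_k t_k for k = 1,…,N. If c_k > c_{k+1} and c_j > c_{j+1} for indices j ≠ k with 1 ≤ j, k ≤ N−1, then |j − k| ≥ 2. In particular, no two adjacent pairs of neighbouring particles can simultaneously be collisions. -/
/-! For two space-like separated particles with the same sign, the characteristic values are
ordered like the positions, since `s (t_a - t_b) ≤ |t_a - t_b| < z_b - z_a`. So a collision forces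
opposite signs. Two adjacent collisions `(a,b)`, `(b,c)` would then give `s_a = -s_b = s_c` together
with `c_a > c_c`, which the space-like separation of `a` and `c` rules out. -/

lemma add_sign_mul_lt_of_spacelike {s ta tb za zb : ℝ} (hs : s = 1 ∨ s = -1)
    (hspace : (ta - tb) ^ 2 < (za - zb) ^ 2) (hz : za < zb) :
    za + s * ta < zb + s * tb := by
  have hs2 : s ^ 2 = 1 := by rcases hs with rfl | rfl <;> norm_num
  have hsq : (s * (ta - tb)) ^ 2 < (zb - za) ^ 2 :=
    calc (s * (ta - tb)) ^ 2 = (ta - tb) ^ 2 := by rw [mul_pow, hs2, one_mul]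
      _ < (za - zb) ^ 2 := hspace
      _ = (zb - za) ^ 2 := by ring
  linarith [le_abs_self (s * (ta - tb)), abs_lt_of_sq_lt_sq hsq (by linarith)]

lemma not_collision_of_collision_of_spacelike {sa sb sc ta tb tc za zb zc : ℝ}
    (hsa : sa = 1 ∨ sa = -1) (hsb : sb = 1 ∨ sb = -1) (hsc : sc = 1 ∨ sc = -1)
    (hab : (ta - tb) ^ 2 < (za - zb) ^ 2) (hbc : (tb - tc) ^ 2 < (zb - zc) ^ 2)
    (hac : (ta - tc) ^ 2 < (za - zc) ^ 2) (hzab : za < zb) (hzbc : zb < zc)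
    (hcollab : za + sa * ta > zb + sb * tb) : ¬ zb + sb * tb > zc + sc * tc := by
  intro hcollbc
  have hsab : sa ≠ sb := by
    rintro rfl
    exact lt_asymm (add_sign_mul_lt_of_spacelike hsa hab hzab) hcollab
  have hsbc : sb ≠ sc := by
    rintro rfl
    exact lt_asymm (add_sign_mul_lt_of_spacelike hsb hbc hzbc) hcollbc
  obtain rfl : sa = sc := by grind
  exact lt_asymm (add_sign_mul_lt_of_spacelike hsa hac (hzab.trans hzbc))
    (hcollbc.trans hcollab)

lemma Fin.not_collision_of_collision_of_spacelike {N : ℕ} {t z s : Fin N → ℝ}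
    (hspace : ∀ j k : Fin N, j ≠ k → (t j - t k) ^ 2 < (z j - z k) ^ 2) (horder : StrictMono z)
    (hs : ∀ k, s k = 1 ∨ s k = -1) {a b c : Fin N} (hab : a < b) (hbc : b < c)
    (hcollab : z a + s a * t a > z b + s b * t b) : ¬ z b + s b * t b > z c + s c * t c :=
  _root_.not_collision_of_collision_of_spacelike (hs a) (hs b) (hs c)
    (hspace _ _ hab.ne) (hspace _ _ hbc.ne) (hspace _ _ (hab.trans hbc).ne)
    (horder hab) (horder hbc) hcollab

/-- in an ordered space-like configuration `(t₁,z₁,…,t_N,z_N)`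
(pairwise `(t_j−t_k)² < (z_j−z_k)²`, `z₁ < ⋯ < z_N`), with sign vector `s` and
characteristic values `c_k = z_k + s_k t_k`, two distinct collisions `(k,k+1)` and
`(j,j+1)` (i.e. `c_k > c_{k+1}`, `c_j > c_{j+1}`, `j ≠ k`) satisfy `|j − k| ≥ 2`:
no two adjacent pairs of neighbouring particles can simultaneously be collisions.
(0-based indices `j, k` with `j+1 < N`, `k+1 < N`.) -/
theorem stmt6 (N : ℕ) (t z : Fin N → ℝ)
    (hspace : ∀ j k : Fin N, j ≠ k → (t j - t k) ^ 2 < (z j - z k) ^ 2)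
    (horder : ∀ j k : Fin N, j < k → z j < z k)
    (s : Fin N → ℝ) (hs : ∀ k, s k = 1 ∨ s k = -1)
    (j k : ℕ) (hj : j + 1 < N) (hk : k + 1 < N) (hjk : j ≠ k)
    (hcollk : z ⟨k, by omega⟩ + s ⟨k, by omega⟩ * t ⟨k, by omega⟩
        > z ⟨k + 1, hk⟩ + s ⟨k + 1, hk⟩ * t ⟨k + 1, hk⟩)
    (hcollj : z ⟨j, by omega⟩ + s ⟨j, by omega⟩ * t ⟨j, by omega⟩
        > z ⟨j + 1, hj⟩ + s ⟨j + 1, hj⟩ * t ⟨j + 1, hj⟩) :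
    j + 2 ≤ k ∨ k + 2 ≤ j := by
  have hmono : StrictMono z := fun a b => horder a b
  by_contra! hclose
  obtain rfl | rfl : j = k + 1 ∨ k = j + 1 := by omega
  · exact Fin.not_collision_of_collision_of_spacelike hspace hmono hs
      (by simp) (by simp) hcollk hcollj
  · exact Fin.not_collision_of_collision_of_spacelike hspace hmono hs
      (by simp) (by simp) hcollj hcollk
end

section
/- Let N ≥ 2, β ∈ ℝ, φ^{(1)},…,φ^{(N−1)} ∈ ℝ, and let (ψ_s)_{s ∈ {−1,+1}^N} be a family of functions ψ_s : S̄_1 → ℂ satisfying the boundary conditions: for every k ∈ {1,…,N−1}, every s with s_k = +1, s_{k+1} = −1, and every p ∈ C_{k,k+1}, ψ_s(p) = e^{iφ^{(k)}} ψ_{τ_k s}(p). Define the Lorentz-transformed family ψ'_s(x_1,…,x_N) := (∏_{j=1}^N (cosh β − s_j sinh β)) · ψ_s(Λ_{−β} x_1, …, Λ_{−β} x_N) on S̄_1, where Λ_{−β}(t,z) := (t cosh β − z sinh β, −t sinh β + z cosh β) (this is well defined since the componentwise boost maps S̄_1 onto itself). Then (ψ'_s) satisfies the same boundary conditions: ψ'_s(p)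 = e^{iφ^{(k)}} ψ'_{τ_k s}(p) for all k, all s with s_k = +1, s_{k+1} = −1, and all p ∈ C_{k,k+1}. -/
/-!
A boost is linear and preserves the Minkowski form `t² - z²`, so it preserves space-like
separation of any two points; since `|sinh β| < cosh β`, it also preserves the sign of the
spatial separation of space-like separated points. Hence componentwise boosting maps `S₁`,
and by continuity its closure, into itself, and it keeps coincident points coincident, so it
maps `C_{k,k+1}` into itself. The spinor factor `∏ j, (cosh β - s_j sinh β)` is invariant
under permuting the signs `s`, so the boundary condition for `ψ` evaluated at the boosted
point is exactly the boundary condition for `ψ'`.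
-/

noncomputable section

/-- The Lorentz boost `Λ_β(t,z) = (t cosh β + z sinh β, t sinh β + z cosh β)` on `ℝ²`. -/
def boost (β : ℝ) (x : ℝ × ℝ) : ℝ × ℝ :=
  (x.1 * Real.cosh β + x.2 * Real.sinh β, x.1 * Real.sinh β + x.2 * Real.cosh β)

/-- The set `S₁` of space-like ordered configurations. Points written as `x_k = (t_k, z_k)`. -/
def S1 (N : ℕ) : Set (Fin N → ℝ × ℝ) :=
  {x | (∀ j k : Fin N, j ≠ k → ((x j).1 - (x k).1) ^ 2 < ((x j).2 - (x k).2) ^ 2) ∧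
       ∀ j k : Fin N, j < k → (x j).2 < (x k).2}

/-- The coincidence set `C_{k,k+1}` inside the closure of `S₁` (0-based `k`, `k+1 < N`). -/
def Ckk (N : ℕ) (k : ℕ) (hk : k + 1 < N) : Set (Fin N → ℝ × ℝ) :=
  {x ∈ closure (S1 N) |
    (x ⟨k, Nat.lt_of_succ_lt hk⟩).1 = (x ⟨k + 1, hk⟩).1 ∧
    (x ⟨k, Nat.lt_of_succ_lt hk⟩).2 = (x ⟨k + 1, hk⟩).2}

open Real

lemma boost_sub (β : ℝ) (x y : ℝ × ℝ) : boost β x - boost β y = boost β (x - y) := by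
  ext <;> simp only [boost, Prod.fst_sub, Prod.snd_sub] <;> ring

lemma boost_fst_sq_sub_snd_sq (β : ℝ) (x : ℝ × ℝ) :
    (boost β x).1 ^ 2 - (boost β x).2 ^ 2 = x.1 ^ 2 - x.2 ^ 2 := by
  simp only [boost]
  linear_combination (x.1 ^ 2 - x.2 ^ 2) * cosh_sq_sub_sinh_sq β

lemma abs_sinh_lt_cosh (β : ℝ) : |sinh β| < cosh β :=
  abs_lt_of_sq_lt_sq (by rw [cosh_sq]; linarith) (cosh_pos β).le

lemma boost_snd_pos {β : ℝ} {x : ℝ × ℝ} (hx : x.1 ^ 2 < x.2 ^ 2) (hz : 0 < x.2) :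
    0 < (boost β x).2 := by
  have ht : |x.1| < x.2 := abs_lt_of_sq_lt_sq hx hz.le
  have : |x.1 * sinh β| < x.2 * cosh β := by
    rw [abs_mul]
    exact mul_lt_mul'' ht (abs_sinh_lt_cosh β) (abs_nonneg _) (abs_nonneg _)
  simp only [boost]
  linarith [neg_abs_le (x.1 * sinh β)]

lemma mapsTo_boost_S1 (N : ℕ) (β : ℝ) :
    Set.MapsTo (fun (x : Fin N → ℝ × ℝ) m => boost β (x m)) (S1 N) (S1 N) := by
  rintro x ⟨hspace, hord⟩
  refine ⟨fun j k hjk => ?_, fun j k hjk => ?_⟩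
  · show ((boost β (x j)).1 - (boost β (x k)).1) ^ 2
      < ((boost β (x j)).2 - (boost β (x k)).2) ^ 2
    have := boost_fst_sq_sub_snd_sq β (x j - x k)
    simp only [← boost_sub, Prod.fst_sub, Prod.snd_sub] at this
    linarith [hspace j k hjk]
  · show (boost β (x j)).2 < (boost β (x k)).2
    have hpos : 0 < (boost β (x k - x j)).2 :=
      boost_snd_pos (by simpa using hspace k j hjk.ne') (by simpa using hord j k hjk)
    rw [← boost_sub, Prod.snd_sub] at hpos
    linarith

lemma continuous_boost (β : ℝ) : Continuous (boost β) := by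
  unfold boost
  fun_prop

lemma mapsTo_boost_Ckk (N k : ℕ) (hk : k + 1 < N) (β : ℝ) :
    Set.MapsTo (fun (x : Fin N → ℝ × ℝ) m => boost β (x m)) (Ckk N k hk) (Ckk N k hk) := by
  rintro x ⟨hcl, ht, hz⟩
  have hx : x ⟨k, Nat.lt_of_succ_lt hk⟩ = x ⟨k + 1, hk⟩ := Prod.ext ht hz
  refine ⟨(mapsTo_boost_S1 N β).closure ?_ hcl, ?_, ?_⟩
  · exact continuous_pi fun m => (continuous_boost β).comp (continuous_apply m)
  all_goals simp only [hx]

lemma prod_cosh_sub_sgn_mul_sinh_comp_perm {ι : Type*} [Fintype ι] (β : ℝ) (s : ι → Bool)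
    (σ : Equiv.Perm ι) :
    ∏ j, (cosh β - sgn ((s ∘ σ) j) * sinh β) = ∏ j, (cosh β - sgn (s j) * sinh β) :=
  Equiv.prod_comp σ fun j => cosh β - sgn (s j) * sinh β

theorem stmt9_general (N : ℕ) (β : ℝ) (φ : ℕ → ℝ)
    (ψ : (Fin N → Bool) → (Fin N → ℝ × ℝ) → ℂ)
    (hbc : ∀ (k : ℕ) (hk : k + 1 < N) (s : Fin N → Bool),
      s ⟨k, Nat.lt_of_succ_lt hk⟩ = true → s ⟨k + 1, hk⟩ = false →
      ∀ p ∈ Ckk N k hk,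
        ψ s p = Complex.exp (Complex.I * (φ k : ℂ)) *
          ψ (s ∘ Equiv.swap ⟨k, Nat.lt_of_succ_lt hk⟩ ⟨k + 1, hk⟩) p) :
    ∀ (k : ℕ) (hk : k + 1 < N) (s : Fin N → Bool),
      s ⟨k, Nat.lt_of_succ_lt hk⟩ = true → s ⟨k + 1, hk⟩ = false →
      ∀ p ∈ Ckk N k hk,
        ((∏ j : Fin N, (Real.cosh β - sgn (s j) * Real.sinh β) : ℝ) : ℂ) *
            ψ s (fun m => boost (-β) (p m))
          = Complex.exp (Complex.I * (φ k : ℂ)) *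
            (((∏ j : Fin N, (Real.cosh β -
                sgn ((s ∘ Equiv.swap ⟨k, Nat.lt_of_succ_lt hk⟩ ⟨k + 1, hk⟩) j)
                  * Real.sinh β) : ℝ) : ℂ) *
              ψ (s ∘ Equiv.swap ⟨k, Nat.lt_of_succ_lt hk⟩ ⟨k + 1, hk⟩)
                (fun m => boost (-β) (p m))) := by
  intro k hk s hsk hsk1 p hp
  rw [prod_cosh_sub_sgn_mul_sinh_comp_perm,
    hbc k hk s hsk hsk1 _ (mapsTo_boost_Ckk N k hk (-β) hp)]
  ring

/-- if the family `(ψ_s)` satisfies the boundary conditions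
`ψ_s = e^{iφ^{(k)}} ψ_{τ_k s}` on `C_{k,k+1}` (for `s_k = +1`, `s_{k+1} = −1`), then so
does the Lorentz-transformed family
`ψ'_s(x₁,…,x_N) = (∏_j (cosh β − s_j sinh β)) · ψ_s(Λ_{−β}x₁,…,Λ_{−β}x_N)`. -/
theorem stmt9 (N : ℕ) (hN : 2 ≤ N) (β : ℝ) (φ : ℕ → ℝ)
    (ψ : (Fin N → Bool) → (Fin N → ℝ × ℝ) → ℂ)
    (hbc : ∀ (k : ℕ) (hk : k + 1 < N) (s : Fin N → Bool),
      s ⟨k, Nat.lt_of_succ_lt hk⟩ = true → s ⟨k + 1, hk⟩ = false →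
      ∀ p ∈ Ckk N k hk,
        ψ s p = Complex.exp (Complex.I * (φ k : ℂ)) *
          ψ (s ∘ Equiv.swap ⟨k, Nat.lt_of_succ_lt hk⟩ ⟨k + 1, hk⟩) p) :
    ∀ (k : ℕ) (hk : k + 1 < N) (s : Fin N → Bool),
      s ⟨k, Nat.lt_of_succ_lt hk⟩ = true → s ⟨k + 1, hk⟩ = false →
      ∀ p ∈ Ckk N k hk,
        ((∏ j : Fin N, (Real.cosh β - sgn (s j) * Real.sinh β) : ℝ) : ℂ) *
            ψ s (fun m => boost (-β) (p m))
          = Complex.exp (Complex.I * (φ k : ℂ)) *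
            (((∏ j : Fin N, (Real.cosh β -
                sgn ((s ∘ Equiv.swap ⟨k, Nat.lt_of_succ_lt hk⟩ ⟨k + 1, hk⟩) j)
                  * Real.sinh β) : ℝ) : ℂ) *
              ψ (s ∘ Equiv.swap ⟨k, Nat.lt_of_succ_lt hk⟩ ⟨k + 1, hk⟩)
                (fun m => boost (-β) (p m))) :=
  stmt9_general N β φ ψ hbc
end
end

section
/- Let N ≥ 1, β ∈ ℝ, s ∈ {−1,+1}^N, let U ⊆ (ℝ²)^N be open, and let ψ : U → ℂ be continuously differentiable and satisfy the multi-time transport equations for s on U. Let Λ_β(t,z) := (t cosh β + z sinh β, t sinh β + z cosh β), let U' be the image of U under the componentwise boost, and define ψ'(x_1,…,x_N) := (∏_{j=1}^N (cosh β − s_j sinh β)) · ψ(Λ_{−β} x_1, …, Λ_{−β} x_N) for (x_1,…,x_N) ∈ U'. Then ψ' is continuously differentiable on U' and satisfies the multi-time transport equations for s on U'. (The multi-time Dirac system is covariant under Lorentz boosts.) -/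
/-!
The transport equation for the sign `s_k` says that the derivative of `ψ` along the null
direction `(1, -s_k)` in the `k`-th variable vanishes. Since `s_k² = 1`, every boost maps
`(1, -s_k)` to a multiple of itself, so precomposing with the componentwise boost (a linear
isomorphism, which also preserves `C¹`) keeps the equations, and so does multiplying by any
constant, in particular by `∏ⱼ (cosh β - s_j sinh β)`.
-/

noncomputable section

open Real

theorem boost_neg_boost (β : ℝ) (x : ℝ × ℝ) : boost (-β) (boost β x) = x := by
  have h := cosh_sq_sub_sinh_sq β
  simp only [boost, cosh_neg, sinh_neg, Prod.ext_iff]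
  constructor
  · linear_combination x.1 * h
  · linear_combination x.2 * h

def boostEquiv (β : ℝ) : (ℝ × ℝ) ≃L[ℝ] ℝ × ℝ :=
  LinearEquiv.toContinuousLinearEquiv
    { toFun := boost β
      invFun := boost (-β)
      map_add' x y := by simp only [boost, Prod.ext_iff]; constructor <;> simp <;> ring
      map_smul' c x := by simp only [boost, Prod.ext_iff]; constructor <;> simp <;> ring
      left_inv := boost_neg_boost β
      right_inv x := by simpa using boost_neg_boost (-β) x }

def multiBoost (ι : Type*) (β : ℝ) : (ι → ℝ × ℝ) ≃L[ℝ] ι → ℝ × ℝ :=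
  ContinuousLinearEquiv.piCongrRight fun _ => boostEquiv β

theorem multiBoost_single {ι : Type*} [DecidableEq ι] (β : ℝ) (k : ι) (v : ℝ × ℝ) :
    multiBoost ι β (Pi.single k v) = Pi.single k (boost β v) := by
  funext j
  exact Pi.apply_single (fun _ => boost β) (fun _ => map_zero (boostEquiv β)) k v j

theorem image_boost_eq_preimage {ι : Type*} (β : ℝ) (U : Set (ι → ℝ × ℝ)) :
    (fun (x : ι → ℝ × ℝ) (k : ι) => boost β (x k)) '' U = multiBoost ι (-β) ⁻¹' U := by
  change multiBoost ι β '' U = _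
  rw [ContinuousLinearEquiv.image_eq_preimage_symm]
  rfl

theorem map_boost_eq_smul_of_map_eq_smul {M : Type*} [AddCommGroup M] [Module ℝ M]
    (L : ℝ × ℝ →ₗ[ℝ] M) {σ : ℝ} (hσ : σ * σ = 1) (h : L (1, 0) = σ • L (0, 1)) (γ : ℝ) :
    L (boost γ (1, 0)) = σ • L (boost γ (0, 1)) := by
  have hdecomp (a b : ℝ) : ((a, b) : ℝ × ℝ) = a • (1, 0) + b • (0, 1) := by simp
  simp only [boost, one_mul, zero_mul, add_zero, zero_add]
  rw [hdecomp (cosh γ), hdecomp (sinh γ)]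
  simp only [map_add, map_smul, h]
  linear_combination (norm := module) hσ • (-sinh γ • L (0, 1))

theorem Transport.comp_multiBoost {N : ℕ} {s : Fin N → ℝ} (hs : ∀ k, s k * s k = 1)
    {U : Set (Fin N → ℝ × ℝ)} {ψ : (Fin N → ℝ × ℝ) → ℂ} (hT : Transport s U ψ) (γ : ℝ) :
    Transport s (multiBoost (Fin N) γ ⁻¹' U) (ψ ∘ multiBoost (Fin N) γ) := by
  intro p hp k
  simp only [ContinuousLinearEquiv.comp_right_fderiv, ContinuousLinearMap.comp_apply,
    ContinuousLinearEquiv.coe_coe, multiBoost_single]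
  exact map_boost_eq_smul_of_map_eq_smul
    ((fderiv ℝ ψ _).toLinearMap ∘ₗ LinearMap.single ℝ (fun _ => ℝ × ℝ) k) (hs k) (hT _ hp k) γ

theorem Transport.const_mul_s10 {N : ℕ} {s : Fin N → ℝ} {U : Set (Fin N → ℝ × ℝ)}
    {ψ : (Fin N → ℝ × ℝ) → ℂ} (hT : Transport s U ψ) (c : ℂ) :
    Transport s U (fun x => c * ψ x) := by
  intro p hp k
  change fderiv ℝ (c • ψ) p _ = s k • fderiv ℝ (c • ψ) p _
  simp only [fderiv_const_smul_field, Pi.smul_apply, smul_apply, hT p hp k]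
  exact smul_comm _ _ _

theorem stmt10_general (N : ℕ) (β : ℝ)
    (s : Fin N → ℝ) (hs : ∀ k, s k = 1 ∨ s k = -1)
    (U : Set (Fin N → ℝ × ℝ))
    (ψ : (Fin N → ℝ × ℝ) → ℂ) (hC1 : ContDiffOn ℝ 1 ψ U) (hT : Transport s U ψ) :
    ContDiffOn ℝ 1
        (fun x : Fin N → ℝ × ℝ =>
          ((∏ j : Fin N, (Real.cosh β - s j * Real.sinh β) : ℝ) : ℂ) *
            ψ (fun k => boost (-β) (x k)))
        ((fun (x : Fin N → ℝ × ℝ) (k : Fin N) => boost β (x k)) '' U) ∧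
      Transport s ((fun (x : Fin N → ℝ × ℝ) (k : Fin N) => boost β (x k)) '' U)
        (fun x : Fin N → ℝ × ℝ =>
          ((∏ j : Fin N, (Real.cosh β - s j * Real.sinh β) : ℝ) : ℂ) *
            ψ (fun k => boost (-β) (x k))) := by
  have hs' : ∀ k, s k * s k = 1 := fun k => by rcases hs k with h | h <;> simp [h]
  rw [image_boost_eq_preimage]
  have hψΛ := hC1.comp_continuousLinearMap (multiBoost (Fin N) (-β)).toContinuousLinearMap
  exact ⟨contDiffOn_const.mul hψΛ, (hT.comp_multiBoost hs' (-β)).const_mul_s10 _⟩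

/-- the multi-time transport system is covariant under Lorentz boosts: if
`ψ` is `C¹` on the open set `U` and satisfies the transport equations for `s` there, then
`ψ'(x₁,…,x_N) = (∏_j (cosh β − s_j sinh β)) · ψ(Λ_{−β}x₁,…,Λ_{−β}x_N)` is `C¹` on the
image `U'` of `U` under the componentwise boost `Λ_β` and satisfies the transport
equations for `s` on `U'`. -/
theorem stmt10 (N : ℕ) (hN : 1 ≤ N) (β : ℝ)
    (s : Fin N → ℝ) (hs : ∀ k, s k = 1 ∨ s k = -1)
    (U : Set (Fin N → ℝ × ℝ)) (hU : IsOpen U)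
    (ψ : (Fin N → ℝ × ℝ) → ℂ) (hC1 : ContDiffOn ℝ 1 ψ U) (hT : Transport s U ψ) :
    ContDiffOn ℝ 1
        (fun x : Fin N → ℝ × ℝ =>
          ((∏ j : Fin N, (Real.cosh β - s j * Real.sinh β) : ℝ) : ℂ) *
            ψ (fun k => boost (-β) (x k)))
        ((fun (x : Fin N → ℝ × ℝ) (k : Fin N) => boost β (x k)) '' U) ∧
      Transport s ((fun (x : Fin N → ℝ × ℝ) (k : Fin N) => boost β (x k)) '' U)
        (fun x : Fin N → ℝ × ℝ =>
          ((∏ j : Fin N, (Real.cosh β - s j * Real.sinh β) : ℝ) : ℂ) *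
            ψ (fun k => boost (-β) (x k))) :=
  stmt10_general N β s hs U ψ hC1 hT

end
end

section
/- Let N ≥ 2, let φ^{(1)},…,φ^{(N−1)} ∈ ℝ, and let g = (g_s)_{s∈{−1,+1}^N} be a family of functions g_s : {z ∈ ℝ^N : z_1 ≤ ⋯ ≤ z_N} → ℂ. If (ψ_s) and (χ_s) are both solutions of the initial-boundary value problem with data g, then ψ_s(p) = χ_s(p) for every s ∈ {−1,+1}^N and every p ∈ S̄_1. (Uniqueness part of the existence and uniqueness theorem for the N-particle model.) -/
noncomputable section

/-- A family `(ψ_s)` of functions (indexed by sign vectors `s : Fin N → Bool`) is a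
solution of the initial-boundary value problem with phases `φ^{(k)}` and initial data
`(g_s)`, if each `ψ_s` is continuous on the closure of `S₁`, `C¹` on `S₁`, satisfies the
multi-time transport equations for `s` on `S₁`, the boundary conditions
`ψ_s = e^{iφ^{(k)}} ψ_{τ_k s}` on `C_{k,k+1}` (for `s_k = +1`, `s_{k+1} = −1`), and the
initial conditions `ψ_s(0,z₁,…,0,z_N) = g_s(z₁,…,z_N)` for `z₁ ≤ ⋯ ≤ z_N`. -/
def IsSolution (N : ℕ) (φ : ℕ → ℝ) (g : (Fin N → Bool) → (Fin N → ℝ) → ℂ)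
    (ψ : (Fin N → Bool) → (Fin N → ℝ × ℝ) → ℂ) : Prop :=
  (∀ s, ContinuousOn (ψ s) (closure (S1 N))) ∧
  (∀ s, ContDiffOn ℝ 1 (ψ s) (S1 N)) ∧
  (∀ s, Transport (fun k => sgn (s k)) (S1 N) (ψ s)) ∧
  (∀ (k : ℕ) (hk : k + 1 < N) (s : Fin N → Bool),
    s ⟨k, Nat.lt_of_succ_lt hk⟩ = true → s ⟨k + 1, hk⟩ = false →
    ∀ p ∈ Ckk N k hk,
      ψ s p = Complex.exp (Complex.I * (φ k : ℂ)) *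
        ψ (s ∘ Equiv.swap ⟨k, Nat.lt_of_succ_lt hk⟩ ⟨k + 1, hk⟩) p) ∧
  (∀ s, ∀ z : Fin N → ℝ, (∀ i j : Fin N, i ≤ j → z i ≤ z j) →
    ψ s (fun k => ((0 : ℝ), z k)) = g s z)

/-! Along the characteristics of `ψ_s` the quantities `z_k + s_k t_k` are conserved, and `S₁` is
convex, so `ψ_s(p)` equals the value of `ψ_s` at the end of any straight characteristic segment
from `p ∈ S₁` ending in the closure. If these quantities `c = charCoords s p` are ordered, the
segment reaches `t = 0` inside the closure and the initial data give `ψ_s(p)`. Otherwise some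
adjacent pair has `c_{k+1} < c_k`; then `s_k ≠ s_{k+1}`, the two characteristics meet on
`C_{k,k+1}`, and there the boundary condition relates `ψ_s` to `ψ_{τ_k s}`, whose characteristic
coordinates at nearby points of `S₁` are `c ∘ τ_k`, with one inversion fewer. Induction on the
number of inversions, applied to the difference of two solutions, gives uniqueness. -/

open Set Filter Topology Finset

theorem sgn_not (b : Bool) : sgn (!b) = -sgn b := by
  cases b <;> simp [sgn]

theorem sgn_mul_self (b : Bool) : sgn b * sgn b = 1 := by
  cases b <;> simp [sgn]

/-- The quantity `z + s t` transported unchanged along the characteristics of sign `s`. -/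
def charCoord (b : Bool) (x : ℝ × ℝ) : ℝ := x.2 + sgn b * x.1

def charCoords {N : ℕ} (s : Fin N → Bool) (x : Fin N → ℝ × ℝ) : Fin N → ℝ :=
  fun k => charCoord (s k) (x k)

/-- The point whose `b`- and `!b`-characteristic coordinates are `α` and `β`. -/
def lightPoint (b : Bool) (α β : ℝ) : ℝ × ℝ := (sgn b * (α - β) / 2, (α + β) / 2)

theorem charCoord_lightPoint (b : Bool) (α β : ℝ) : charCoord b (lightPoint b α β) = α := by
  simp only [charCoord, lightPoint]
  linear_combination (α - β) / 2 * sgn_mul_self b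

theorem charCoord_not_lightPoint (b : Bool) (α β : ℝ) :
    charCoord (!b) (lightPoint b α β) = β := by
  simp only [charCoord, lightPoint, sgn_not]
  linear_combination -(α - β) / 2 * sgn_mul_self b

@[fun_prop]
theorem continuous_charCoord (b : Bool) : Continuous (charCoord b) := by
  unfold charCoord; fun_prop

variable {N : ℕ}

theorem mem_S1_iff {x : Fin N → ℝ × ℝ} :
    x ∈ S1 N ↔ ∀ b, StrictMono fun k => charCoord b (x k) := by
  simp only [S1, StrictMono, Bool.forall_bool, charCoord, sgn, Bool.false_eq_true, ↓reduceIte,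
    mem_ofPred_eq]
  constructor
  · rintro ⟨hspace, hord⟩
    refine ⟨fun j k hjk => ?_, fun j k hjk => ?_⟩ <;>
      nlinarith [hspace j k hjk.ne, hord j k hjk]
  · rintro ⟨hminus, hplus⟩
    refine ⟨fun j k hjk => ?_, fun j k hjk => by linarith [hminus hjk, hplus hjk]⟩
    rcases hjk.lt_or_gt with hjk | hjk <;> nlinarith [hminus hjk, hplus hjk]

theorem isOpen_S1 : IsOpen (S1 N) := by
  have : S1 N = ⋂ (b) (j) (k) (_ : j < k), {x | charCoord b (x j) < charCoord b (x k)} := by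
    ext x; simp [mem_S1_iff, StrictMono]
  rw [this]
  refine isOpen_iInter_of_finite fun b => isOpen_iInter_of_finite fun j =>
    isOpen_iInter_of_finite fun k => isOpen_iInter_of_finite fun _ => ?_
  exact isOpen_lt ((continuous_charCoord b).comp (continuous_apply j))
    ((continuous_charCoord b).comp (continuous_apply k))

theorem convex_S1 : Convex ℝ (S1 N) := by
  intro x hx y hy a c ha hc hac
  rw [mem_S1_iff] at hx hy ⊢
  intro b j k hjk
  have hxjk := hx b hjk
  have hyjk := hy b hjk
  simp only [charCoord, Pi.add_apply, Pi.smul_apply, Prod.fst_add, Prod.snd_add, Prod.smul_fst,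
    Prod.smul_snd, smul_eq_mul] at hxjk hyjk ⊢
  rcases ha.eq_or_lt with rfl | ha
  · obtain rfl : c = 1 := by linarith
    linarith
  · nlinarith [mul_pos ha (sub_pos.2 hxjk), mul_nonneg hc (sub_nonneg.2 hyjk.le)]

theorem mem_closure_S1_of_monotone {c : Fin N → ℝ} (hc : Monotone c) :
    (fun k => ((0 : ℝ), c k)) ∈ closure (S1 N) := by
  set x : ℝ → Fin N → ℝ × ℝ := fun ε k => (0, c k + ε * k)
  have hx : Continuous x := by fun_prop
  refine mem_closure_of_tendsto
    ((hx.tendsto' 0 _ (by simp [x])).mono_left (nhdsWithin_le_nhds (s := Ioi 0))) ?_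
  filter_upwards [self_mem_nhdsWithin] with ε (hε : 0 < ε)
  refine mem_S1_iff.2 fun b => ?_
  simpa [x, charCoord] using hc.add_strictMono
    ((Nat.strictMono_cast.comp Fin.val_strictMono).const_mul hε)

theorem Transport.fderiv_apply_eq_zero_s11 {s : Fin N → ℝ} {U : Set (Fin N → ℝ × ℝ)}
    {f : (Fin N → ℝ × ℝ) → ℂ} (hf : Transport s U f) {p : Fin N → ℝ × ℝ} (hp : p ∈ U)
    {v : Fin N → ℝ × ℝ} (hv : ∀ k, (v k).2 = -(s k * (v k).1)) : fderiv ℝ f p v = 0 := by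
  have hsingle (k : Fin N) : (Pi.single k (v k) : Fin N → ℝ × ℝ) =
      (v k).1 • (Pi.single k ((1 : ℝ), (0 : ℝ)) : Fin N → ℝ × ℝ) +
        (v k).2 • (Pi.single k ((0 : ℝ), (1 : ℝ)) : Fin N → ℝ × ℝ) := by
    rw [← Pi.single_smul, ← Pi.single_smul, ← Pi.single_add]
    simp
  rw [← Finset.univ_sum_single v, map_sum]
  refine Finset.sum_eq_zero fun k _ => ?_
  rw [hsingle, map_add, map_smul, map_smul, hf p hp k, hv, smul_smul, ← add_smul]
  simp only [mul_comm, add_neg_cancel, zero_smul]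

theorem Transport.eq_of_charCoords_eq {s : Fin N → Bool} {U : Set (Fin N → ℝ × ℝ)}
    (hUo : IsOpen U) (hUc : Convex ℝ U) {f : (Fin N → ℝ × ℝ) → ℂ}
    (hf : Transport (fun k => sgn (s k)) U f) (hcont : ContinuousOn f (closure U))
    (hdiff : ∀ x ∈ U, DifferentiableAt ℝ f x) {x y : Fin N → ℝ × ℝ} (hx : x ∈ U)
    (hy : y ∈ closure U) (hxy : charCoords s x = charCoords s y) : f x = f y := by
  set γ : ℝ → Fin N → ℝ × ℝ := ⇑(AffineMap.lineMap (k := ℝ) x y)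
  have hγU : ∀ τ ∈ Ico (0 : ℝ) 1, γ τ ∈ U := fun τ hτ => by
    have := hUc.combo_interior_closure_mem_interior (hUo.interior_eq ▸ hx) hy
      (sub_pos.2 hτ.2) hτ.1 (sub_add_cancel 1 τ)
    rwa [hUo.interior_eq, ← AffineMap.lineMap_apply_module] at this
  have hγ : MapsTo γ (Icc 0 1) (closure U) := by
    intro τ hτ
    rcases hτ.2.lt_or_eq with h | rfl
    · exact subset_closure (hγU τ ⟨hτ.1, h⟩)
    · simpa [γ] using hy
  have hv (k : Fin N) : ((y - x) k).2 = -(sgn (s k) * ((y - x) k).1) := by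
    have := congrFun hxy k
    simp only [charCoords, charCoord] at this
    simp only [Pi.sub_apply, Prod.fst_sub, Prod.snd_sub]
    linarith
  have hderiv (τ : ℝ) (hτ : τ ∈ Ico (0 : ℝ) 1) : HasDerivWithinAt (f ∘ γ) 0 (Ici τ) τ := by
    have h := (hdiff _ (hγU τ hτ)).hasFDerivAt.comp_hasDerivAt τ AffineMap.hasDerivAt_lineMap
    rw [hf.fderiv_apply_eq_zero_s11 (hγU τ hτ) hv] at h
    exact h.hasDerivWithinAt
  have := constant_of_has_deriv_right_zero
    (hcont.comp AffineMap.lineMap_continuous.continuousOn hγ) hderiv 1 ⟨zero_le_one, le_rfl⟩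
  simpa [γ] using this.symm

section Inversions

variable {α : Type*} [LinearOrder α]

def inversions (c : Fin N → α) : Finset (Fin N × Fin N) :=
  Finset.univ.filter fun q => q.1 < q.2 ∧ c q.2 < c q.1

theorem exists_succ_lt_of_not_monotone {c : Fin N → α} (hc : ¬Monotone c) :
    ∃ (k : ℕ) (hk : k + 1 < N), c ⟨k + 1, hk⟩ < c ⟨k, Nat.lt_of_succ_lt hk⟩ := by
  cases N with
  | zero => exact absurd (fun i => i.elim0) hc
  | succ n =>
    rw [Fin.monotone_iff_le_succ] at hc
    push Not at hc
    obtain ⟨i, hi⟩ := hc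
    exact ⟨i, by omega, hi⟩

theorem swap_lt_swap_of_val_add_one_eq {J J' u v : Fin N} (hJ : (J : ℕ) + 1 = J')
    (huv : u < v) (hne : ¬(u = J ∧ v = J')) : Equiv.swap J J' u < Equiv.swap J J' v := by
  rw [Fin.lt_def] at huv ⊢
  rw [Fin.ext_iff, Fin.ext_iff] at hne
  simp only [Equiv.swap_apply_def]
  split_ifs <;> simp only [Fin.ext_iff] at * <;> omega

theorem card_inversions_comp_swap_lt {c : Fin N → α} {J J' : Fin N} (hJ : (J : ℕ) + 1 = J')
    (hdesc : c J' < c J) : #(inversions (c ∘ Equiv.swap J J')) < #(inversions c) := by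
  set σ := Equiv.swap J J'
  have hJJ' : J < J' := Fin.lt_def.2 (by omega)
  have hmem : (J, J') ∈ inversions c := by simp [inversions, hJJ', hdesc]
  have hsub : (inversions (c ∘ σ)).map (σ.prodCongr σ).toEmbedding ⊆
      (inversions c).erase (J, J') := by
    intro q hq
    simp only [inversions, Finset.mem_map, Finset.mem_filter, Finset.mem_univ, true_and,
      Function.comp_apply] at hq
    obtain ⟨⟨u, v⟩, ⟨huv, hcuv⟩, rfl⟩ := hq
    have hne : ¬(u = J ∧ v = J') := by
      rintro ⟨rfl, rfl⟩
      simp [σ] at hcuv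
      exact hcuv.asymm hdesc
    simp only [inversions, Finset.mem_erase, Finset.mem_filter, Finset.mem_univ, true_and]
    refine ⟨fun h => ?_, swap_lt_swap_of_val_add_one_eq hJ huv hne, hcuv⟩
    obtain ⟨rfl, rfl⟩ : u = J' ∧ v = J := by simpa [σ, Equiv.swap_apply_eq_iff] using h
    exact huv.asymm hJJ'
  calc #(inversions (c ∘ σ)) = #((inversions (c ∘ σ)).map (σ.prodCongr σ).toEmbedding) :=
        (Finset.card_map _).symm
    _ ≤ #((inversions c).erase (J, J')) := Finset.card_le_card hsub
    _ < #(inversions c) := Finset.card_erase_lt_of_mem hmem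

end Inversions

theorem eq_not_of_charCoords_lt {s : Fin N → Bool} {p : Fin N → ℝ × ℝ} (hp : p ∈ S1 N)
    {J J' : Fin N} (hJJ' : J < J') (hdesc : charCoords s p J' < charCoords s p J) :
    s J' = !s J := by
  rcases Bool.eq_or_eq_not (s J') (s J) with h | h
  · have := mem_S1_iff.1 hp (s J) hJJ'
    simp only [charCoords, h] at hdesc this
    exact absurd this hdesc.asymm
  · exact h

section CollisionPath

/-- At `δ = 0` particles `J` and `J'` sit at the crossing point of their `s`-characteristics
through `p`; varying `δ` moves them apart along their `s ∘ swap J J'`-characteristics. -/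
def collisionPath (s : Fin N → Bool) (p : Fin N → ℝ × ℝ) (J J' : Fin N) (δ : ℝ) :
    Fin N → ℝ × ℝ :=
  Function.update
    (Function.update p J (lightPoint (s J) (charCoords s p J - δ) (charCoords s p J'))) J'
    (lightPoint (s J) (charCoords s p J) (charCoords s p J' + δ))

variable {s : Fin N → Bool} {p : Fin N → ℝ × ℝ} {J J' : Fin N}

theorem collisionPath_apply_left (hJJ' : J ≠ J') (δ : ℝ) :
    collisionPath s p J J' δ J = lightPoint (s J) (charCoords s p J - δ) (charCoords s p J') := by
  simp [collisionPath, hJJ']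

theorem collisionPath_apply_right (δ : ℝ) :
    collisionPath s p J J' δ J' = lightPoint (s J) (charCoords s p J) (charCoords s p J' + δ) := by
  simp [collisionPath]

theorem collisionPath_apply_of_ne (δ : ℝ) {k : Fin N} (hkJ : k ≠ J) (hkJ' : k ≠ J') :
    collisionPath s p J J' δ k = p k := by
  simp [collisionPath, hkJ, hkJ']

theorem continuous_collisionPath : Continuous (collisionPath s p J J') := by
  refine (continuous_const.update J ?_).update J' ?_ <;> simp only [lightPoint] <;> fun_prop

theorem charCoords_collisionPath_zero (hJJ' : J ≠ J') (hs : s J' = !s J) :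
    charCoords s (collisionPath s p J J' 0) = charCoords s p := by
  funext k
  rcases eq_or_ne k J with rfl | hkJ
  · simp [charCoords, collisionPath_apply_left hJJ', charCoord_lightPoint]
  rcases eq_or_ne k J' with rfl | hkJ'
  · simp [charCoords, collisionPath_apply_right, hs, charCoord_not_lightPoint]
  · simp [charCoords, collisionPath_apply_of_ne 0 hkJ hkJ']

theorem charCoords_comp_swap_collisionPath (hJJ' : J ≠ J') (hs : s J' = !s J) (δ : ℝ) :
    charCoords (s ∘ Equiv.swap J J') (collisionPath s p J J' δ) =
      charCoords s p ∘ Equiv.swap J J' := by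
  funext k
  rcases eq_or_ne k J with rfl | hkJ
  · simp [charCoords, collisionPath_apply_left hJJ', hs, charCoord_not_lightPoint]
  rcases eq_or_ne k J' with rfl | hkJ'
  · simp [charCoords, collisionPath_apply_right, charCoord_lightPoint]
  · simp [charCoords, collisionPath_apply_of_ne δ hkJ hkJ', Equiv.swap_apply_of_ne_of_ne hkJ hkJ']

theorem charCoord_collisionPath_zero_lt (hp : p ∈ S1 N) (hJ : (J : ℕ) + 1 = J')
    (hs : s J' = !s J) (b : Bool) {u v : Fin N} (huv : u < v) (hcoll : ¬(u = J ∧ v = J')) :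
    charCoord b (collisionPath s p J J' 0 u) < charCoord b (collisionPath s p J J' 0 v) := by
  have hJJ' : J < J' := Fin.lt_def.2 (by omega)
  have hP := mem_S1_iff.1 hp b
  have hmid (k : Fin N) (hk : k = J ∨ k = J') :
      charCoord b (p J) ≤ charCoord b (collisionPath s p J J' 0 k) ∧
        charCoord b (collisionPath s p J J' 0 k) ≤ charCoord b (p J') := by
    have : collisionPath s p J J' 0 k =
        lightPoint (s J) (charCoords s p J) (charCoords s p J') := by
      rcases hk with rfl | rfl <;>
        simp [collisionPath_apply_left hJJ'.ne, collisionPath_apply_right]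
    rw [this]
    rcases Bool.eq_or_eq_not b (s J) with rfl | rfl
    · rw [charCoord_lightPoint]; exact ⟨le_rfl, (hP hJJ').le⟩
    · rw [charCoord_not_lightPoint, charCoords, hs]; exact ⟨(hP hJJ').le, le_rfl⟩
  simp only [Fin.ext_iff] at hcoll
  rw [Fin.lt_def] at huv
  by_cases hu : u = J ∨ u = J'
  · have hv : v ≠ J ∧ v ≠ J' := by simp only [ne_eq, Fin.ext_iff] at hu ⊢; omega
    rw [collisionPath_apply_of_ne 0 hv.1 hv.2]
    exact (hmid u hu).2.trans_lt (hP (Fin.lt_def.2 (by simp only [Fin.ext_iff] at hu hv; omega)))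
  push Not at hu
  rw [collisionPath_apply_of_ne 0 hu.1 hu.2]
  by_cases hv : v = J ∨ v = J'
  · exact (hP (Fin.lt_def.2 (by simp only [ne_eq, Fin.ext_iff] at hu hv; omega))).trans_le
      (hmid v hv).1
  · push Not at hv
    rw [collisionPath_apply_of_ne 0 hv.1 hv.2]
    exact hP (Fin.lt_def.2 huv)

theorem eventually_collisionPath_mem_S1 (hp : p ∈ S1 N) (hJ : (J : ℕ) + 1 = J')
    (hdesc : charCoords s p J' < charCoords s p J) :
    ∀ᶠ δ in 𝓝[>] 0, collisionPath s p J J' δ ∈ S1 N := by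
  have hJJ' : J < J' := Fin.lt_def.2 (by omega)
  have hs : s J' = !s J := eq_not_of_charCoords_lt hp hJJ' hdesc
  simp only [mem_S1_iff, StrictMono]
  refine eventually_all.2 fun b => eventually_all.2 fun u => eventually_all.2 fun v =>
    eventually_imp_distrib_left.2 fun huv => ?_
  by_cases hcoll : u = J ∧ v = J'
  · obtain ⟨rfl, rfl⟩ := hcoll
    filter_upwards [self_mem_nhdsWithin] with δ (hδ : 0 < δ)
    simp only [collisionPath_apply_left hJJ'.ne, collisionPath_apply_right]
    rcases Bool.eq_or_eq_not b (s u) with rfl | rfl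
    · simp only [charCoord_lightPoint]; linarith
    · simp only [charCoord_not_lightPoint]; linarith
  have hcont : Continuous (collisionPath s p J J') := continuous_collisionPath
  exact (ContinuousAt.eventually_lt (f := fun δ => charCoord b (collisionPath s p J J' δ u))
    (g := fun δ => charCoord b (collisionPath s p J J' δ v)) (by fun_prop) (by fun_prop)
    (charCoord_collisionPath_zero_lt hp hJ hs b huv hcoll)).filter_mono nhdsWithin_le_nhds

end CollisionPath

theorem exists_collision {s : Fin N → Bool} {p : Fin N → ℝ × ℝ} (hp : p ∈ S1 N) {J J' : Fin N}
    (hJ : (J : ℕ) + 1 = J') (hdesc : charCoords s p J' < charCoords s p J) :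
    ∃ q : Fin N → ℝ × ℝ, q J = q J' ∧ charCoords s q = charCoords s p ∧
      q ∈ closure {x ∈ S1 N |
        charCoords (s ∘ Equiv.swap J J') x = charCoords s p ∘ Equiv.swap J J'} := by
  have hJJ' : J < J' := Fin.lt_def.2 (by omega)
  have hs : s J' = !s J := eq_not_of_charCoords_lt hp hJJ' hdesc
  refine ⟨collisionPath s p J J' 0, by simp [collisionPath_apply_left hJJ'.ne,
    collisionPath_apply_right], charCoords_collisionPath_zero hJJ'.ne hs,
    mem_closure_of_tendsto ((continuous_collisionPath.tendsto 0).mono_left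
      (nhdsWithin_le_nhds (s := Ioi 0))) ?_⟩
  filter_upwards [eventually_collisionPath_mem_S1 hp hJ hdesc] with δ hδ
  exact ⟨hδ, charCoords_comp_swap_collisionPath hJJ'.ne hs δ⟩

namespace IsSolution

variable {φ : ℕ → ℝ} {g : (Fin N → Bool) → (Fin N → ℝ) → ℂ}
  {ψ χ : (Fin N → Bool) → (Fin N → ℝ × ℝ) → ℂ}

theorem differentiableAt (hψ : IsSolution N φ g ψ) (s : Fin N → Bool) {p : Fin N → ℝ × ℝ}
    (hp : p ∈ S1 N) : DifferentiableAt ℝ (ψ s) p :=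
  ((hψ.2.1 s).differentiableOn one_ne_zero).differentiableAt (isOpen_S1.mem_nhds hp)

theorem eq_of_charCoords_eq (hψ : IsSolution N φ g ψ) (s : Fin N → Bool)
    {x y : Fin N → ℝ × ℝ} (hx : x ∈ S1 N) (hy : y ∈ closure (S1 N))
    (hxy : charCoords s x = charCoords s y) : ψ s x = ψ s y :=
  (hψ.2.2.1 s).eq_of_charCoords_eq isOpen_S1 convex_S1 (hψ.1 s)
    (fun _ hp => hψ.differentiableAt s hp) hx hy hxy

theorem sub (hψ : IsSolution N φ g ψ) (hχ : IsSolution N φ g χ) :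
    IsSolution N φ 0 (ψ - χ) := by
  refine ⟨fun s => (hψ.1 s).sub (hχ.1 s), fun s => (hψ.2.1 s).sub (hχ.2.1 s),
    fun s p hp k => ?_, fun k hk s hsk hsk' p hp => ?_, fun s z hz => ?_⟩
  · rw [Pi.sub_apply, fderiv_sub (hψ.differentiableAt s hp) (hχ.differentiableAt s hp)]
    simp only [_root_.sub_apply, hψ.2.2.1 s p hp k, hχ.2.2.1 s p hp k, smul_sub]
  · simp only [Pi.sub_apply, hψ.2.2.2.1 k hk s hsk hsk' p hp, hχ.2.2.2.1 k hk s hsk hsk' p hp,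
      mul_sub]
  · simp [hψ.2.2.2.2 s z hz, hχ.2.2.2.2 s z hz]

theorem apply_eq_zero_iff_comp_swap (hψ : IsSolution N φ g ψ) {k : ℕ} (hk : k + 1 < N)
    {s : Fin N → Bool} (hs : s ⟨k, Nat.lt_of_succ_lt hk⟩ ≠ s ⟨k + 1, hk⟩) {q : Fin N → ℝ × ℝ}
    (hq : q ∈ Ckk N k hk) :
    ψ s q = 0 ↔ ψ (s ∘ Equiv.swap ⟨k, Nat.lt_of_succ_lt hk⟩ ⟨k + 1, hk⟩) q = 0 := by
  set σ := Equiv.swap (⟨k, Nat.lt_of_succ_lt hk⟩ : Fin N) ⟨k + 1, hk⟩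
  have hphase : Complex.exp (Complex.I * (φ k : ℂ)) ≠ 0 := Complex.exp_ne_zero _
  cases hsk : s ⟨k, Nat.lt_of_succ_lt hk⟩
  · have hsk' : s ⟨k + 1, hk⟩ = true := by simpa [hsk] using hs.symm
    have hswap : s ∘ σ ∘ σ = s := by funext i; simp [σ]
    have := hψ.2.2.2.1 k hk (s ∘ σ) (by simpa [σ] using hsk') (by simpa [σ] using hsk) q hq
    rw [Function.comp_assoc, hswap] at this
    rw [this, mul_eq_zero, or_iff_right hphase]
  · have hsk' : s ⟨k + 1, hk⟩ = false := by simpa [hsk] using hs.symm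
    rw [hψ.2.2.2.1 k hk s hsk hsk' q hq, mul_eq_zero, or_iff_right hphase]

theorem eq_zero_of_mem_S1 {D : (Fin N → Bool) → (Fin N → ℝ × ℝ) → ℂ} (hD : IsSolution N φ 0 D)
    (s : Fin N → Bool) {p : Fin N → ℝ × ℝ} (hp : p ∈ S1 N) : D s p = 0 := by
  induction hn : #(inversions (charCoords s p)) using Nat.strong_induction_on
    generalizing s p with
  | _ n ih =>
  by_cases hmono : Monotone (charCoords s p)
  · rw [hD.eq_of_charCoords_eq s hp (mem_closure_S1_of_monotone hmono)]
    · exact hD.2.2.2.2 s _ fun i j hij => hmono hij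
    · funext k; simp [charCoords, charCoord]
  obtain ⟨k, hk, hdesc⟩ := exists_succ_lt_of_not_monotone hmono
  obtain ⟨q, hqJ, hcq, hqT⟩ := exists_collision hp rfl hdesc
  have hq : q ∈ Ckk N k hk :=
    ⟨closure_mono (sep_subset _ _) hqT, congrArg Prod.fst hqJ, congrArg Prod.snd hqJ⟩
  have hs := eq_not_of_charCoords_lt hp (Fin.lt_def.2 (Nat.lt_succ_self k)) hdesc
  rw [hD.eq_of_charCoords_eq s hp hq.1 hcq.symm,
    hD.apply_eq_zero_iff_comp_swap hk (by simp [hs]) hq]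
  -- `q` is a limit of points of `S₁` at which `D (s ∘ τ_k)` vanishes by induction
  refine Set.EqOn.of_subset_closure (g := 0) (fun x hx => ?_)
    ((hD.1 _).mono (closure_mono (sep_subset _ _))) continuousOn_const subset_closure
    subset_rfl hqT
  exact ih _ (hn ▸ hx.2 ▸ card_inversions_comp_swap_lt rfl hdesc) _ hx.1 rfl

theorem eq_zero {D : (Fin N → Bool) → (Fin N → ℝ × ℝ) → ℂ} (hD : IsSolution N φ 0 D)
    (s : Fin N → Bool) {p : Fin N → ℝ × ℝ} (hp : p ∈ closure (S1 N)) : D s p = 0 :=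
  Set.EqOn.of_subset_closure (g := 0) (fun _ hx => hD.eq_zero_of_mem_S1 s hx) (hD.1 s)
    continuousOn_const subset_closure subset_rfl hp

end IsSolution

theorem stmt11_general (N : ℕ) (φ : ℕ → ℝ)
    (g : (Fin N → Bool) → (Fin N → ℝ) → ℂ)
    (ψ χ : (Fin N → Bool) → (Fin N → ℝ × ℝ) → ℂ)
    (hψ : IsSolution N φ g ψ) (hχ : IsSolution N φ g χ) :
    ∀ s : Fin N → Bool, ∀ p ∈ closure (S1 N), ψ s p = χ s p :=
  fun s _ hp => sub_eq_zero.1 ((hψ.sub hχ).eq_zero s hp)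

/-- uniqueness: two solutions of the initial-boundary value problem with
the same data `g` agree on the closure of `S₁`, for every component `s`. -/
theorem stmt11 (N : ℕ) (hN : 2 ≤ N) (φ : ℕ → ℝ)
    (g : (Fin N → Bool) → (Fin N → ℝ) → ℂ)
    (ψ χ : (Fin N → Bool) → (Fin N → ℝ × ℝ) → ℂ)
    (hψ : IsSolution N φ g ψ) (hχ : IsSolution N φ g χ) :
    ∀ s : Fin N → Bool, ∀ p ∈ closure (S1 N), ψ s p = χ s p :=
  stmt11_general N φ g ψ χ hψ hχ
end
end

section
/- Let α, β : ℝ → ℂ and φ ∈ ℝ with e^{iφ} ≠ −1. Suppose there exist real numbers u_1 < w_1 < u_2 < w_2 such that α(u_1) ≠ 0, α(u_2) ≠ 0, β(w_1) ≠ 0 and β(w_2) ≠ 0. Define h : {(u,v) ∈ ℝ² : u ≠ v} → ℂ by h(u,v) := α(u)β(v) for u < v and h(u,v) := −e^{iφ} α(u)β(v) for u > v. Then there exist no functions f, g : ℝ → ℂ with h(u,v) = f(u)·g(v) for all u ≠ v. (Core of the proof that the model generates entanglement, i.e. is interacting, whenever the boundary phase differs from π.) -/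
theorem mul_eq_mul_of_separable {ι κ R : Type*} [CommMonoid R] {F : ι → κ → R}
    {f : ι → R} {g : κ → R} {x₁ x₂ : ι} {y₁ y₂ : κ}
    (h₁₁ : F x₁ y₁ = f x₁ * g y₁) (h₂₂ : F x₂ y₂ = f x₂ * g y₂)
    (h₁₂ : F x₁ y₂ = f x₁ * g y₂) (h₂₁ : F x₂ y₁ = f x₂ * g y₁) :
    F x₁ y₁ * F x₂ y₂ = F x₁ y₂ * F x₂ y₁ := by
  rw [h₁₁, h₂₂, h₁₂, h₂₁]
  ac_rfl

/-- the model is interacting: let `α, β : ℝ → ℂ`, `φ ∈ ℝ` with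
`e^{iφ} ≠ −1`, and suppose there are `u₁ < w₁ < u₂ < w₂` with `α(u₁), α(u₂), β(w₁),
β(w₂) ≠ 0`. Then the function `h(u,v) = α(u)β(v)` for `u < v`, `h(u,v) = −e^{iφ}α(u)β(v)`
for `u > v`, defined for `u ≠ v`, is not of product form `f(u)·g(v)`. -/
theorem stmt15 (α β : ℝ → ℂ) (φ : ℝ)
    (hφ : Complex.exp (Complex.I * (φ : ℂ)) ≠ -1)
    (u1 w1 u2 w2 : ℝ) (h1 : u1 < w1) (h2 : w1 < u2) (h3 : u2 < w2)
    (ha1 : α u1 ≠ 0) (ha2 : α u2 ≠ 0) (hb1 : β w1 ≠ 0) (hb2 : β w2 ≠ 0) :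
    ¬ ∃ f g : ℝ → ℂ, ∀ u v : ℝ, u ≠ v →
      (if u < v then α u * β v
        else -Complex.exp (Complex.I * (φ : ℂ)) * (α u * β v)) = f u * g v := by
  rintro ⟨f, g, H⟩
  have h13 : u1 < w2 := h1.trans (h2.trans h3)
  -- Three of the four entries lie above the diagonal; only `(u2, w1)` picks up the phase.
  have minor := mul_eq_mul_of_separable
    (F := fun u v ↦ if u < v then α u * β v
      else -Complex.exp (Complex.I * (φ : ℂ)) * (α u * β v))
    (H u1 w1 h1.ne) (H u2 w2 h3.ne) (H u1 w2 h13.ne) (H u2 w1 h2.ne')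
  simp only [if_pos h1, if_pos h3, if_pos h13, if_neg (not_lt.mpr h2.le)] at minor
  have hne : α u1 * β w1 * α u2 * β w2 ≠ 0 :=
    mul_ne_zero (mul_ne_zero (mul_ne_zero ha1 hb1) ha2) hb2
  have phase : -Complex.exp (Complex.I * (φ : ℂ)) = 1 :=
    mul_right_cancel₀ hne (by linear_combination -minor)
  exact hφ (by linear_combination -phase)
end

section
/- Let α > 0 and let a_1 < b_1 < a_2 < b_2 be real numbers. Then there exist real numbers t_1, y_1, t_2, y_2, s_1, x_1, s_2, x_2 satisfying the eight equations: y_1 − t_1 = a_1; y_2 + t_2 = a_2; (t_1 − t_2)² = (y_1 − y_2)² − α²; x_1 − s_1 = b_1; x_2 + s_2 = b_2; (s_1 − s_2)² = (x_1 − x_2)² − α²; x_1 + s_1 = y_1 + t_1; x_2 − s_2 = y_2 − t_2. (Solvability of the system of equations used in the proof of the non-existence of dynamics on α-space-like configurations; note that the quantity ((b_2−a_2)²(b_1−a_1) + 4α²(b_2−a_2))/(b_1−a_1) appearing in the explicit solution is positive.) -/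
/-!
In null coordinates `w = y - t`, `v = y + t` of each particle, the boundary condition
`(t₁ - t₂)² = (y₁ - y₂)² - α²` becomes the hyperbola `(w₁ - w₂)(v₁ - v₂) = α²`. The
characteristic constraints fix `w₁ = a₁`, `v₂ = a₂` for the first configuration and `w₁ = b₁`,
`v₂ = b₂` for the second, and leave one common pair `(v₁, w₂) = (u₁, u₂)`. So it suffices to
intersect the hyperbolas `(a₁ - u₂)(u₁ - a₂) = α²` and `(b₁ - u₂)(u₁ - b₂) = α²`, i.e.
`XY = α²` and `(X - q)(Y + p) = α²` for `X = u₁ - a₂`, `Y = a₁ - u₂`, `p = b₁ - a₁`, `q = b₂ - a₂`.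
Subtracting them leaves a line, and substituting back gives a quadratic in `X` with a positive
root.
-/

lemma exists_pos_mul_sq_sub_eq {p q c : ℝ} (hp : 0 < p) (hq : 0 < q) (hc : 0 ≤ c) :
    ∃ X > 0, p * X ^ 2 - p * q * X = q * c := by
  obtain ⟨s, hs, hs2⟩ : ∃ s ≥ 0, s ^ 2 = (p * q) ^ 2 + 4 * p * q * c :=
    ⟨_, Real.sqrt_nonneg _, Real.sq_sqrt (by positivity)⟩
  refine ⟨(p * q + s) / (2 * p), by positivity, ?_⟩
  field_simp
  linear_combination hs2

lemma exists_mul_eq_and_sub_mul_add_eq {p q c : ℝ} (hp : 0 < p) (hq : 0 < q) (hc : 0 ≤ c) :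
    ∃ X Y : ℝ, X * Y = c ∧ (X - q) * (Y + p) = c := by
  obtain ⟨X, hX, hquad⟩ := exists_pos_mul_sq_sub_eq hp hq hc
  refine ⟨X, c / X, by field_simp, ?_⟩
  field_simp
  linear_combination hquad

lemma boundary_of_nullCoords {w₁ v₁ w₂ v₂ c : ℝ} (h : (w₁ - w₂) * (v₁ - v₂) = c) :
    ((v₁ - w₁) / 2 - (v₂ - w₂) / 2) ^ 2 = ((v₁ + w₁) / 2 - (v₂ + w₂) / 2) ^ 2 - c := by
  linear_combination -h

theorem stmt17_general (α : ℝ) (a1 b1 a2 b2 : ℝ)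
    (h1 : a1 < b1) (h3 : a2 < b2) :
    ∃ t1 y1 t2 y2 s1 x1 s2 x2 : ℝ,
      y1 - t1 = a1 ∧
      y2 + t2 = a2 ∧
      (t1 - t2) ^ 2 = (y1 - y2) ^ 2 - α ^ 2 ∧
      x1 - s1 = b1 ∧
      x2 + s2 = b2 ∧
      (s1 - s2) ^ 2 = (x1 - x2) ^ 2 - α ^ 2 ∧
      x1 + s1 = y1 + t1 ∧
      x2 - s2 = y2 - t2 := by
  obtain ⟨X, Y, hfirst, hsecond⟩ :=
    exists_mul_eq_and_sub_mul_add_eq (sub_pos.2 h1) (sub_pos.2 h3) (sq_nonneg α)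
  set u1 := a2 + X
  set u2 := a1 - Y
  refine ⟨(u1 - a1) / 2, (u1 + a1) / 2, (a2 - u2) / 2, (a2 + u2) / 2,
    (u1 - b1) / 2, (u1 + b1) / 2, (b2 - u2) / 2, (b2 + u2) / 2,
    by ring, by ring, boundary_of_nullCoords ?_, by ring, by ring,
    boundary_of_nullCoords ?_, by ring, by ring⟩
  · linear_combination hfirst
  · linear_combination hsecond

/-- solvability of the system of equations in the proof of the
non-existence of dynamics on `α`-space-like configurations: for `α > 0` and
`a₁ < b₁ < a₂ < b₂` there exist reals `t₁, y₁, t₂, y₂, s₁, x₁, s₂, x₂` with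
`y₁ − t₁ = a₁`, `y₂ + t₂ = a₂`, `(t₁ − t₂)² = (y₁ − y₂)² − α²`,
`x₁ − s₁ = b₁`, `x₂ + s₂ = b₂`, `(s₁ − s₂)² = (x₁ − x₂)² − α²`,
`x₁ + s₁ = y₁ + t₁`, `x₂ − s₂ = y₂ − t₂`. -/
theorem stmt17 (α : ℝ) (hα : 0 < α) (a1 b1 a2 b2 : ℝ)
    (h1 : a1 < b1) (h2 : b1 < a2) (h3 : a2 < b2) :
    ∃ t1 y1 t2 y2 s1 x1 s2 x2 : ℝ,
      y1 - t1 = a1 ∧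
      y2 + t2 = a2 ∧
      (t1 - t2) ^ 2 = (y1 - y2) ^ 2 - α ^ 2 ∧
      x1 - s1 = b1 ∧
      x2 + s2 = b2 ∧
      (s1 - s2) ^ 2 = (x1 - x2) ^ 2 - α ^ 2 ∧
      x1 + s1 = y1 + t1 ∧
      x2 - s2 = y2 - t2 :=
  stmt17_general α a1 b1 a2 b2 h1 h3
end
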